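/- For the square framework in ℝ², the anchored cosheaf boundary map ∂_N : ℝ⁸ → ℝ⁴ is surjective with 4-dimensional kernel, and the induced map π₊ : H₁M → H₁N from moment-frame self-stresses is injective with 3-dimensional image; hence there is exactly one anchored self-stress class not arising from a moment-frame self-stress, corresponding to the parallelogram mechanism. -/

import Mathlib

open Module Function

/-- The wedge product of two vectors in `ℝ²`, identifying `⋀²ℝ²` with `ℝ`. -/
def wedge (F d : Fin 2 → ℝ) : ℝ := F 0 * d 1 - F 1 * d 0

/-- Transport of a force-couple `(M, F) ∈ ⋀²ℝ² ⊕ ℝ²` along a lever arm `d`: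
the stalk maps of the moment cosheaf. -/
def T (d : Fin 2 → ℝ) (x : ℝ × (Fin 2 → ℝ)) : ℝ × (Fin 2 → ℝ) :=
  (x.1 + wedge x.2 d, x.2)

/-!
The transport maps `T d` form an action of the group `(ℝ², +)` on `ℝ³`, so a self-stress of the
moment cosheaf on a cycle is determined by its value on one edge, transported to the others
through the edge midpoints; the action being abelian, transporting once around the cycle is the
identity, so every value on the first edge extends, and `H₁M ≅ ℝ³`. The image of such a stress
in the anchored cosheaf remembers the base moment and, through the shears, the wedge of the
constant force with every edge vector; two independent edges force it to vanish. The anchored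
boundary is onto because the edge-stalk vector `(-a/2, -a)` maps to `0` at the head and to `a` at
the tail, so `H₁N` has dimension `8 - 4 = 4`.
-/

lemma wedge_add_right (F d d' : Fin 2 → ℝ) : wedge F (d + d') = wedge F d + wedge F d' := by
  simp only [wedge, Pi.add_apply]; ring

lemma wedge_zero_right (F : Fin 2 → ℝ) : wedge F 0 = 0 := by
  simp [wedge]

lemma eq_zero_of_wedge_eq_zero {F d₁ d₂ : Fin 2 → ℝ} (h₁ : wedge F d₁ = 0) (h₂ : wedge F d₂ = 0)
    (hd : wedge d₁ d₂ ≠ 0) : F = 0 := by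
  simp only [wedge] at h₁ h₂ hd
  have h0 : F 0 * (d₁ 0 * d₂ 1 - d₁ 1 * d₂ 0) = 0 := by linear_combination d₁ 0 * h₂ - d₂ 0 * h₁
  have h1 : F 1 * (d₁ 0 * d₂ 1 - d₁ 1 * d₂ 0) = 0 := by linear_combination d₁ 1 * h₂ - d₂ 1 * h₁
  ext i
  fin_cases i
  · simpa [hd] using h0
  · simpa [hd] using h1

lemma T_zero (x : ℝ × (Fin 2 → ℝ)) : T 0 x = x := by
  simp [T, wedge_zero_right]

lemma T_T (d d' : Fin 2 → ℝ) (x : ℝ × (Fin 2 → ℝ)) : T d (T d' x) = T (d' + d) x := by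
  ext
  · simp only [T, wedge_add_right]; ring
  · rfl

lemma T_add (d : Fin 2 → ℝ) (x y : ℝ × (Fin 2 → ℝ)) : T d (x + y) = T d x + T d y := by
  ext
  · simp only [T, wedge, Prod.fst_add, Prod.snd_add, Pi.add_apply]; ring
  · rfl

lemma T_smul (d : Fin 2 → ℝ) (c : ℝ) (x : ℝ × (Fin 2 → ℝ)) : T d (c • x) = c • T d x := by
  ext
  · simp only [T, wedge, Prod.smul_fst, Prod.smul_snd, Pi.smul_apply, smul_eq_mul]; ring
  · rfl

lemma eq_T_of_T_eq_T {d d' : Fin 2 → ℝ} {x y : ℝ × (Fin 2 → ℝ)} (h : T d x = T d' y) :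
    x = T (d' - d) y := by
  rw [← T_zero x, ← sub_self d, sub_eq_add_neg, ← T_T, h, T_T, ← sub_eq_add_neg]

section Cycle

variable {n : ℕ} [NeZero n]

lemma sum_cycle_incidence_smul {X : Type*} [AddCommGroup X] [Module ℝ X] (f : Fin n → X)
    (v : Fin n) :
    ∑ e, ((if e + 1 = v then (1 : ℝ) else 0) - (if e = v then 1 else 0)) • f e =
      f (v - 1) - f v := by
  simp only [sub_smul, ite_smul, one_smul, zero_smul, Finset.sum_sub_distrib,
    ← eq_sub_iff_add_eq, Finset.sum_ite_eq', Finset.mem_univ, if_true]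

noncomputable def cycleMidpoint (p : Fin n → Fin 2 → ℝ) (e : Fin n) : Fin 2 → ℝ :=
  (1 / 2 : ℝ) • (p e + p (e + 1))

noncomputable def cycleStress (p : Fin n → Fin 2 → ℝ) :
    (ℝ × (Fin 2 → ℝ)) →ₗ[ℝ] (Fin n → ℝ × (Fin 2 → ℝ)) where
  toFun x e := T (cycleMidpoint p e - cycleMidpoint p 0) x
  map_add' x y := funext fun _ => T_add _ x y
  map_smul' c x := funext fun _ => T_smul _ c x

@[simp]
lemma cycleStress_apply (p : Fin n → Fin 2 → ℝ) (x : ℝ × (Fin 2 → ℝ)) (e : Fin n) :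
    cycleStress p x e = T (cycleMidpoint p e - cycleMidpoint p 0) x :=
  rfl

lemma cycleStress_injective (p : Fin n → Fin 2 → ℝ) : Injective (cycleStress p) := by
  intro x y h
  simpa [T_zero] using congrFun h 0

open Fin.NatCast in
lemma ker_eq_range_cycleStress (p : Fin n → Fin 2 → ℝ)
    (bdM : (Fin n → ℝ × (Fin 2 → ℝ)) →ₗ[ℝ] (Fin n → ℝ × (Fin 2 → ℝ)))
    (hbdM : ∀ (w : Fin n → ℝ × (Fin 2 → ℝ)) (v : Fin n), bdM w v =
      ∑ e, ((if e + 1 = v then (1 : ℝ) else 0) - (if e = v then 1 else 0))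
        • T (p v - (1 / 2 : ℝ) • (p e + p (e + 1))) (w e)) :
    LinearMap.ker bdM = LinearMap.range (cycleStress p) := by
  set m := cycleMidpoint p with hm
  have hbd : ∀ w v, bdM w v = T (p v - m (v - 1)) (w (v - 1)) - T (p v - m v) (w v) := by
    intro w v
    rw [hbdM]
    exact sum_cycle_incidence_smul (fun e => T (p v - m e) (w e)) v
  ext w
  simp only [LinearMap.mem_ker, LinearMap.mem_range]
  constructor
  · intro hw
    have hstep : ∀ v, w v = T (m v - m (v - 1)) (w (v - 1)) := by
      intro v
      have := eq_T_of_T_eq_T (sub_eq_zero.1 ((hbd w v).symm.trans (congrFun hw v))).symm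
      rwa [sub_sub_sub_cancel_left] at this
    have hnat : ∀ i : ℕ, w i = T (m i - m 0) (w 0) := by
      intro i
      induction i with
      | zero => simp [T_zero]
      | succ i ih => rw [hstep, Nat.cast_succ, add_sub_cancel_right, ih, T_T, sub_add_sub_cancel']
    exact ⟨w 0, funext fun v => by rw [cycleStress_apply, ← hm, ← Fin.cast_val_eq_self v, hnat]⟩
  · rintro ⟨x, rfl⟩
    funext v
    simp only [hbd, cycleStress_apply, T_T, Pi.zero_apply, ← hm]
    rw [sub_add_sub_cancel', sub_add_sub_cancel', sub_self]

lemma injective_comp_cycleStress (p : Fin n → Fin 2 → ℝ)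
    (π : (Fin n → ℝ × (Fin 2 → ℝ)) →ₗ[ℝ] (Fin n → ℝ × ℝ))
    (hπ : ∀ (w : Fin n → ℝ × (Fin 2 → ℝ)) (e : Fin n),
      π w e = ((w e).1, - wedge (w e).2 (p (e + 1) - p e)))
    {e₁ e₂ : Fin n} (hp : wedge (p (e₁ + 1) - p e₁) (p (e₂ + 1) - p e₂) ≠ 0) :
    Injective (π ∘ₗ cycleStress p) := by
  rw [injective_iff_map_eq_zero]
  intro x hx
  have hπx : ∀ e, π (cycleStress p x) e = 0 := congrFun hx
  have hM : x.1 = 0 := by simpa [hπ, T_zero] using congrArg Prod.fst (hπx 0)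
  have hF : ∀ e, wedge x.2 (p (e + 1) - p e) = 0 := fun e => by
    simpa [hπ, T] using congrArg Prod.snd (hπx e)
  exact Prod.ext hM (eq_zero_of_wedge_eq_zero (hF e₁) (hF e₂) hp)

end Cycle

section Anchored

variable {V E : Type*} [Fintype E] [DecidableEq E] [DecidableEq V] (s t : E → V)
  (bdN : (E → ℝ × ℝ) →ₗ[ℝ] (V → ℝ))
  (hbdN : ∀ (w : E → ℝ × ℝ) (v : V), bdN w v =
    ∑ e, ((if t e = v then (1 : ℝ) else 0) * ((w e).1 - (w e).2 / 2)
      - (if s e = v then (1 : ℝ) else 0) * ((w e).1 + (w e).2 / 2)))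
include hbdN

lemma anchoredBoundary_single (e : E) (a : ℝ) :
    bdN (Pi.single e (-(a / 2), -a)) = Pi.single (s e) a := by
  funext v
  rw [hbdN, Finset.sum_eq_single e (fun e' _ he' => by simp [he']) (by simp)]
  simp only [Pi.single_eq_same, Pi.single_apply, eq_comm (a := v)]
  split_ifs <;> ring

lemma anchoredBoundary_surjective [Fintype V] (hs : Surjective s) : Surjective bdN := by
  rw [← LinearMap.range_eq_top, Submodule.eq_top_iff']
  intro y
  rw [← Finset.univ_sum_single y]
  refine Submodule.sum_mem _ fun v _ => ?_
  obtain ⟨e, rfl⟩ := hs v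
  exact ⟨_, anchoredBoundary_single s t bdN hbdN e (y (s e))⟩

end Anchored

/-- An anchored edge stalk `N_e ≅ ℝ × ℝ` records the midpoint moment `M` and the
shear scalar `σ` (the shear force being `σ` times the unit normal of the edge), the
vertex stalks `N_v ≅ ℝ` record moments, the anchored extension maps send `(M, σ)` to
`M ∓ σ/2`, and the projection `π : C₁M → C₁N` is `(M, F) ↦ (M, −F ∧ (p_t − p_s))`. -/
theorem square_anchored_count
    (p : Fin 4 → Fin 2 → ℝ)
    (hp : p = ![![0, 0], ![1, 0], ![1, 1], ![0, 1]])
    (s : Fin 4 → Fin 4) (hs : s = id)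
    (t : Fin 4 → Fin 4) (ht : t = fun i => i + 1)
    (bdM : (Fin 4 → ℝ × (Fin 2 → ℝ)) →ₗ[ℝ] (Fin 4 → ℝ × (Fin 2 → ℝ)))
    (hbdM : ∀ (w : Fin 4 → ℝ × (Fin 2 → ℝ)) (v : Fin 4), bdM w v =
      ∑ e, ((if t e = v then (1 : ℝ) else 0) - (if s e = v then 1 else 0))
        • T (p v - (1/2 : ℝ) • (p (s e) + p (t e))) (w e))
    (bdN : (Fin 4 → ℝ × ℝ) →ₗ[ℝ] (Fin 4 → ℝ))
    (hbdN : ∀ (w : Fin 4 → ℝ × ℝ) (v : Fin 4), bdN w v =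
      ∑ e, ((if t e = v then (1 : ℝ) else 0) * ((w e).1 - (w e).2 / 2)
        - (if s e = v then (1 : ℝ) else 0) * ((w e).1 + (w e).2 / 2)))
    (π : (Fin 4 → ℝ × (Fin 2 → ℝ)) →ₗ[ℝ] (Fin 4 → ℝ × ℝ))
    (hπ : ∀ (w : Fin 4 → ℝ × (Fin 2 → ℝ)) (e : Fin 4),
      π w e = ((w e).1, - wedge (w e).2 (p (t e) - p (s e))))
    (πplus : LinearMap.ker bdM →ₗ[ℝ] LinearMap.ker bdN)
    (hπplus : ∀ w : LinearMap.ker bdM, (πplus w : Fin 4 → ℝ × ℝ) = π w) :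
    Surjective bdN ∧
    finrank ℝ (LinearMap.ker bdN) = 4 ∧
    finrank ℝ (LinearMap.ker bdM) = 3 ∧
    Injective πplus ∧
    finrank ℝ (LinearMap.range πplus) = 3 ∧
    finrank ℝ (LinearMap.ker bdN ⧸ LinearMap.range πplus) = 1 := by
  subst hp hs ht
  have hsurj : Surjective bdN := anchoredBoundary_surjective id _ bdN hbdN surjective_id
  have hker : LinearMap.ker bdM = LinearMap.range (cycleStress _) :=
    ker_eq_range_cycleStress _ bdM hbdM
  have hkerN : finrank ℝ (LinearMap.ker bdN) = 4 := by
    have := LinearMap.finrank_range_add_finrank_ker bdN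
    rw [LinearMap.range_eq_top.2 hsurj, finrank_top] at this
    simp only [finrank_pi_fintype, finrank_prod, Module.finrank_self, Finset.sum_const,
      Finset.card_univ, Fintype.card_fin, smul_eq_mul] at this
    omega
  have hkerM : finrank ℝ (LinearMap.ker bdM) = 3 := by
    rw [hker, LinearMap.finrank_range_of_inj (cycleStress_injective _)]
    simp
  have hπinj : Injective πplus := by
    have hproj := injective_comp_cycleStress _ π hπ (e₁ := 0) (e₂ := 1) (by simp [wedge])
    rw [injective_iff_map_eq_zero]
    intro w hw
    obtain ⟨x, hx⟩ : (w : Fin 4 → ℝ × (Fin 2 → ℝ)) ∈ LinearMap.range (cycleStress _) := by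
      rw [← hker]; exact w.2
    have hx0 : x = 0 := by
      refine hproj (?_ : _ = (π ∘ₗ cycleStress _) 0)
      rw [map_zero, LinearMap.comp_apply, hx, ← hπplus, hw, Submodule.coe_zero]
    ext1
    rw [← hx, hx0, map_zero, Submodule.coe_zero]
  have hrange : finrank ℝ (LinearMap.range πplus) = 3 := by
    rw [LinearMap.finrank_range_of_inj hπinj, hkerM]
  refine ⟨hsurj, hkerN, hkerM, hπinj, hrange, ?_⟩
  have := Submodule.finrank_quotient_add_finrank (LinearMap.range πplus)
  omega
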